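/- arXiv:1805.07456 — 2 statements merged into one kernel-verified Lean document; each statement's English description precedes it below -/
import Mathlib

section
/- Let L be the Laplacian of a connected undirected graph on N ≥ 2 nodes, and let β, δ > 0 be such that β δ λ < 1 for every nonzero eigenvalue λ of L. Set H = −β Rᵀ L R ∈ ℝ^{(N−1)×(N−1)}. Then the delay difference equation with one step of delay, p(k+1) = p(k) + δ H p(k−1), is exponentially stable. -/
open Matrix Filter

/-- `A` is a nonnegative weighted adjacency matrix with zero diagonal. -/
def IsAdjacencyMatrix {N : ℕ} (A : Matrix (Fin N) (Fin N) ℝ) : Prop :=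
  (∀ i j, 0 ≤ A i j) ∧ ∀ i, A i i = 0

/-- `L` is the out-Laplacian of the weighted digraph with adjacency matrix `A`:
`L i i = ∑ j, A i j` and `L i j = -A i j` for `i ≠ j`. -/
def IsOutLaplacian {N : ℕ} (A L : Matrix (Fin N) (Fin N) ℝ) : Prop :=
  (∀ i, L i i = ∑ j, A i j) ∧ ∀ i j, i ≠ j → L i j = -A i j

/-- Strong connectivity: there is a directed edge from `u` to `v` iff `A v u > 0`, and any
ordered pair of distinct nodes is joined by a directed path. -/
def IsStronglyConnected {N : ℕ} (A : Matrix (Fin N) (Fin N) ℝ) : Prop :=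
  ∀ i j : Fin N, i ≠ j → Relation.TransGen (fun u v => 0 < A v u) i j

/-- Weight-balanced: the column sums of the out-Laplacian vanish, i.e. `1ᵀ L = 0`. -/
def IsWeightBalanced {N : ℕ} (L : Matrix (Fin N) (Fin N) ℝ) : Prop :=
  ∀ j, ∑ i, L i j = 0

/-- The all-ones vector `1_N`. -/
noncomputable def ones (N : ℕ) : EuclideanSpace ℝ (Fin N) := WithLp.toLp 2 (fun _ => 1)

/-- The average `(1/N) ∑ j v j` of the entries of a vector. -/
noncomputable def avg {N : ℕ} (v : EuclideanSpace ℝ (Fin N)) : ℝ := (∑ j, v j) / N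

/-- The projection `Π_N v = v - avg(v) • 1_N` onto the orthogonal complement of `1_N`. -/
noncomputable def proj {N : ℕ} (v : EuclideanSpace ℝ (Fin N)) : EuclideanSpace ℝ (Fin N) :=
  v - avg v • ones N

/-- A solution of the delay difference equation `x(k+1) = x(k) + M x(k-d)`:
a function on `{k : ℤ | k ≥ -d}` (here on all of `ℤ`) satisfying the recursion for `k ≥ 0`. -/
def IsDDSolution {n : ℕ} (M : Matrix (Fin n) (Fin n) ℝ) (d : ℕ)
    (x : ℤ → EuclideanSpace ℝ (Fin n)) : Prop :=
  ∀ k : ℤ, 0 ≤ k → x (k + 1) = x k + Matrix.toEuclideanLin M (x (k - d))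

/-- Exponential stability of `x(k+1) = x(k) + M x(k-d)`: uniform geometric decay bound in
terms of the maximum of the solution over `{-d, …, 0}`. -/
def DDExpStable {n : ℕ} (M : Matrix (Fin n) (Fin n) ℝ) (d : ℕ) : Prop :=
  ∃ c > (0:ℝ), ∃ ω ∈ Set.Ioo (0:ℝ) 1, ∀ x, IsDDSolution M d x → ∀ k : ℤ, 0 ≤ k →
    ‖x k‖ ≤ c * ω ^ k *
      (Finset.Icc (-(d:ℤ)) 0).sup' (Finset.nonempty_Icc.mpr (by omega)) (fun j => ‖x j‖)


/-!
In the coordinates `(p(k), p(k-1))` the delay equation is the linear recursion driven by the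
block matrix `C = [[1, S], [1, 0]]`, `S = δ H`, so it suffices that the complex spectrum of `C`
lies in the open unit disc (Gelfand's formula then gives `‖Cᵏ‖ ≤ c ωᵏ`). If `C (u, w) = z (u, w)`
then `S w = (z² - z) w`; as `S` is symmetric, `z² - z` is a real eigenvalue `m` of `S`. Both
`-S = βδ RᵀLR` and `1 + S = Rᵀ (1 - βδ L) R` are positive definite: the first because on a
connected graph the kernel of `L` is spanned by `1_N`, which `R` avoids, the second because every
eigenvalue of `1 - βδ L` is positive. Hence `-1 < m < 0`, and every root of `z² - z = m` then has
`|z| < 1`.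
-/

open scoped NNReal ENNReal

theorem spectrum.exists_norm_pow_le_mul_pow_of_norm_lt_one {A : Type*} [NormedRing A]
    [NormedAlgebra ℂ A] [CompleteSpace A] {a : A} (ha : ∀ z ∈ spectrum ℂ a, ‖z‖ < 1) :
    ∃ c > 0, ∃ ω ∈ Set.Ioo (0 : ℝ) 1, ∀ n : ℕ, ‖a ^ n‖ ≤ c * ω ^ n := by
  rcases subsingleton_or_nontrivial A with hA | hA
  · exact ⟨1, one_pos, 1 / 2, by norm_num, fun n => by simp [Subsingleton.elim (a ^ n) 0]⟩
  have hρ : spectralRadius ℂ a < (1 : ℝ≥0) :=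
    spectrum.spectralRadius_lt_of_forall_lt a fun z hz => by exact_mod_cast ha z hz
  obtain ⟨ω, hρω, hω1⟩ := ENNReal.lt_iff_exists_nnreal_btwn.mp hρ
  have hω0 : (0 : ℝ) < ω := ENNReal.coe_pos.mp (pos_of_gt hρω)
  have hpow : ∀ᶠ n : ℕ in atTop, ‖a ^ n‖ / ω ^ n ≤ 1 := by
    filter_upwards [(spectrum.pow_nnnorm_pow_one_div_tendsto_nhds_spectralRadius a
      ).eventually_lt_const hρω, eventually_ge_atTop 1] with n hn hn1
    rw [one_div, ENNReal.rpow_inv_lt_iff (by positivity), ENNReal.rpow_natCast] at hn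
    rw [div_le_one (by positivity)]
    exact_mod_cast hn.le
  obtain ⟨C, hC⟩ := (isBoundedUnder_of_eventually_le hpow).bddAbove_range
  refine ⟨max C 1, by positivity, ω, ⟨hω0, by exact_mod_cast hω1⟩, fun n => ?_⟩
  calc ‖a ^ n‖ = ‖a ^ n‖ / ω ^ n * ω ^ n := by field_simp
    _ ≤ max C 1 * ω ^ n := by gcongr; exact (hC ⟨n, rfl⟩).trans (le_max_left _ _)

section LinftyOpNorm

attribute [local instance] Matrix.linftyOpNormedAddCommGroup Matrix.linftyOpNormedRing
  Matrix.linftyOpNormedAlgebra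

lemma Matrix.linfty_opNorm_map_ofReal {m n : Type*} [Fintype m] [Fintype n]
    (M : Matrix m n ℝ) : ‖M.map ((↑) : ℝ → ℂ)‖ = ‖M‖ := by
  simp [Matrix.linfty_opNorm_def]

theorem Matrix.exists_norm_pow_mulVec_le {ι : Type*} [Fintype ι] [DecidableEq ι]
    {M : Matrix ι ι ℝ} (hM : ∀ z ∈ spectrum ℂ (M.map ((↑) : ℝ → ℂ)), ‖z‖ < 1) :
    ∃ c > 0, ∃ ω ∈ Set.Ioo (0 : ℝ) 1, ∀ (n : ℕ) (v : ι → ℝ),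
      ‖(M ^ n) *ᵥ v‖ ≤ c * ω ^ n * ‖v‖ := by
  have : CompleteSpace (Matrix ι ι ℂ) := FiniteDimensional.complete ℂ _
  obtain ⟨c, hc, ω, hω, hpow⟩ := spectrum.exists_norm_pow_le_mul_pow_of_norm_lt_one hM
  refine ⟨c, hc, ω, hω, fun n v => (linfty_opNorm_mulVec _ v).trans ?_⟩
  gcongr
  rw [← linfty_opNorm_map_ofReal]
  exact (M.map_pow Complex.ofRealHom n).symm ▸ hpow n

end LinftyOpNorm

lemma EuclideanSpace.norm_le_sqrt_card_mul_norm_ofLp {n : ℕ} (x : EuclideanSpace ℝ (Fin n)) :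
    ‖x‖ ≤ Real.sqrt n * ‖WithLp.ofLp x‖ := by
  simpa [Real.sqrt_eq_rpow] using
    (PiLp.lipschitzWith_toLp 2 (fun _ : Fin n => ℝ)).norm_le_mul (by simp) (WithLp.ofLp x)

/-- The map `(p(k), p(k-1)) ↦ (p(k+1), p(k))` of the recursion `p(k+1) = p(k) + M p(k-1)`. -/
def delayCompanion {n : ℕ} (M : Matrix (Fin n) (Fin n) ℝ) :
    Matrix (Fin n ⊕ Fin n) (Fin n ⊕ Fin n) ℝ :=
  fromBlocks 1 M 1 0

lemma IsDDSolution.sumElim_eq_delayCompanion_pow_mulVec {n : ℕ}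
    {M : Matrix (Fin n) (Fin n) ℝ} {x : ℤ → EuclideanSpace ℝ (Fin n)} (hx : IsDDSolution M 1 x)
    (k : ℕ) :
    Sum.elim (x k).ofLp (x (k - 1)).ofLp =
      delayCompanion M ^ k *ᵥ Sum.elim (x 0).ofLp (x (-1)).ofLp := by
  induction k with
  | zero => simp
  | succ k ih =>
    rw [pow_succ', ← mulVec_mulVec, ← ih, delayCompanion, fromBlocks_mulVec]
    push_cast
    simp [hx k (Int.natCast_nonneg k), Matrix.toEuclideanLin]

theorem ddExpStable_one_of_spectrum_delayCompanion {n : ℕ} {M : Matrix (Fin n) (Fin n) ℝ}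
    (hM : ∀ z ∈ spectrum ℂ ((delayCompanion M).map ((↑) : ℝ → ℂ)), ‖z‖ < 1) :
    DDExpStable M 1 := by
  obtain ⟨c, hc, ω, ⟨hω0, hω1⟩, hpow⟩ := Matrix.exists_norm_pow_mulVec_le hM
  refine ⟨(Real.sqrt n + 1) * c, by positivity, ω, ⟨hω0, hω1⟩, fun x hx k hk => ?_⟩
  lift k to ℕ using hk
  set m := (Finset.Icc (-((1 : ℕ) : ℤ)) 0).sup' (Finset.nonempty_Icc.mpr (by omega))
    (fun j => ‖x j‖)
  have hm0 : ‖x 0‖ ≤ m := Finset.le_sup' (fun j => ‖x j‖) (by simp)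
  have hm1 : ‖x (-1)‖ ≤ m := Finset.le_sup' (fun j => ‖x j‖) (by simp)
  have hx0 : ‖Sum.elim (x 0).ofLp (x (-1)).ofLp‖ ≤ m :=
    pi_norm_le_iff_of_nonneg ((norm_nonneg _).trans hm0) |>.mpr fun
      | .inl i => (PiLp.norm_apply_le _ i).trans hm0
      | .inr i => (PiLp.norm_apply_le _ i).trans hm1
  have hxk : ‖(x k).ofLp‖ ≤ ‖Sum.elim (x k).ofLp (x (k - 1)).ofLp‖ :=
    pi_norm_le_iff_of_nonneg (norm_nonneg _) |>.mpr fun i =>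
      norm_le_pi_norm (Sum.elim (x k).ofLp (x (k - 1)).ofLp) (Sum.inl i)
  rw [hx.sumElim_eq_delayCompanion_pow_mulVec] at hxk
  calc ‖x k‖ ≤ Real.sqrt n * ‖(x k).ofLp‖ := EuclideanSpace.norm_le_sqrt_card_mul_norm_ofLp _
    _ ≤ Real.sqrt n * (c * ω ^ k * m) := by
        gcongr
        exact hxk.trans ((hpow k _).trans (by gcongr))
    _ ≤ (Real.sqrt n + 1) * c * ω ^ (k : ℤ) * m := by
        rw [zpow_natCast]
        nlinarith [mul_nonneg (mul_nonneg hc.le (pow_nonneg hω0.le k)) ((norm_nonneg _).trans hm0)]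

lemma Complex.norm_lt_one_of_sq_sub_self_eq_ofReal {z : ℂ} {m : ℝ} (h : z ^ 2 - z = m)
    (hm₁ : -1 < m) (hm₀ : m < 0) : ‖z‖ < 1 := by
  have hre := congrArg Complex.re h
  have him := congrArg Complex.im h
  simp only [sq, Complex.sub_re, Complex.mul_re, Complex.ofReal_re, Complex.sub_im,
    Complex.mul_im, Complex.ofReal_im] at hre him
  have hz : ‖z‖ ^ 2 < 1 := by
    rw [Complex.sq_norm, Complex.normSq_apply]
    rcases mul_eq_zero.mp (show z.im * (2 * z.re - 1) = 0 by linarith) with h0 | h0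
    · rw [h0] at hre ⊢; nlinarith
    · nlinarith
  nlinarith [norm_nonneg z]

lemma Matrix.IsSymm.exists_eigenvector_of_map_ofReal {n : Type*} [Fintype n] [DecidableEq n]
    {S : Matrix n n ℝ} (hS : S.IsSymm) {μ : ℂ} {w : n → ℂ} (hw : w ≠ 0)
    (h : S.map ((↑) : ℝ → ℂ) *ᵥ w = μ • w) :
    μ = μ.re ∧ ∃ v : n → ℝ, v ≠ 0 ∧ S *ᵥ v = μ.re • v := by
  have hherm : (S.map ((↑) : ℝ → ℂ)).IsHermitian := by
    ext i j; simp [hS.apply i j]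
  have hconj := (isSymmetric_toEuclideanLin_iff.mpr hherm).conj_eigenvalue_eq_self
    (Module.End.hasEigenvalue_of_hasEigenvector (μ := μ) (x := WithLp.toLp 2 w)
      ⟨Module.End.mem_eigenspace_iff.mpr (by simp [h]), by simpa using hw⟩)
  have him : μ.im = 0 := Complex.conj_eq_iff_im.mp hconj
  refine ⟨(Complex.conj_eq_iff_re.mp hconj).symm, ?_⟩
  have hcoord : ∀ i, ∑ j, (S i j : ℂ) * w j = μ * w i := fun i => by
    simpa [mulVec, dotProduct] using congrFun h i
  have hSre : S *ᵥ (fun i => (w i).re) = μ.re • fun i => (w i).re := funext fun i => by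
    simpa [mulVec, dotProduct, Complex.re_sum, Complex.mul_re, him] using
      congrArg Complex.re (hcoord i)
  have hSim : S *ᵥ (fun i => (w i).im) = μ.re • fun i => (w i).im := funext fun i => by
    simpa [mulVec, dotProduct, Complex.im_sum, Complex.mul_im, him] using
      congrArg Complex.im (hcoord i)
  by_cases hre : (fun i => (w i).re) = 0
  · refine ⟨fun i => (w i).im, fun him => hw (funext fun i => Complex.ext ?_ ?_), hSim⟩
    exacts [congrFun hre i, congrFun him i]
  · exact ⟨_, hre, hSre⟩

lemma exists_eigenvector_of_mem_spectrum_delayCompanion {n : ℕ} {S : Matrix (Fin n) (Fin n) ℝ}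
    {z : ℂ} (hz : z ∈ spectrum ℂ ((delayCompanion S).map ((↑) : ℝ → ℂ))) :
    ∃ w : Fin n → ℂ, w ≠ 0 ∧ S.map ((↑) : ℝ → ℂ) *ᵥ w = (z ^ 2 - z) • w := by
  rw [← Matrix.spectrum_toLin', ← Module.End.hasEigenvalue_iff_mem_spectrum] at hz
  obtain ⟨v, hv, hv0⟩ := hz.exists_hasEigenvector
  rw [Module.End.mem_eigenspace_iff, Matrix.toLin'_apply, delayCompanion, fromBlocks_map,
    ← Sum.elim_comp_inl_inr v, fromBlocks_mulVec] at hv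
  have htop i : v (.inl i) + (S.map ((↑) : ℝ → ℂ) *ᵥ (v ∘ Sum.inr)) i = z * v (.inl i) := by
    simpa using congrFun hv (.inl i)
  have hbot i : v (.inl i) = z * v (.inr i) := by simpa using congrFun hv (.inr i)
  refine ⟨v ∘ Sum.inr, fun h0 => hv0 (funext fun | .inl i => ?_ | .inr i => ?_),
    funext fun i => ?_⟩
  · simp [hbot, show v (.inr i) = 0 from congrFun h0 i]
  · exact congrFun h0 i
  · rw [Pi.smul_apply, Function.comp_apply, smul_eq_mul]
    linear_combination htop i + (z - 1) * hbot i

theorem norm_lt_one_of_mem_spectrum_delayCompanion {n : ℕ} {S : Matrix (Fin n) (Fin n) ℝ}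
    (hneg : (-S).PosDef) (hone : (1 + S).PosDef) {z : ℂ}
    (hz : z ∈ spectrum ℂ ((delayCompanion S).map ((↑) : ℝ → ℂ))) : ‖z‖ < 1 := by
  have hS : S.IsSymm := by simpa using hneg.isHermitian.neg
  obtain ⟨w, hw, hSw⟩ := exists_eigenvector_of_mem_spectrum_delayCompanion hz
  obtain ⟨hm, v, hv, hSv⟩ := hS.exists_eigenvector_of_map_ofReal hw hSw
  have h₁ := hneg.dotProduct_mulVec_pos hv
  have h₂ := hone.dotProduct_mulVec_pos hv
  simp only [star_trivial, neg_mulVec, add_mulVec, one_mulVec, hSv, dotProduct_neg,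
    dotProduct_add, dotProduct_smul, smul_eq_mul] at h₁ h₂
  exact Complex.norm_lt_one_of_sq_sub_self_eq_ofReal hm (by nlinarith) (by nlinarith)

lemma Matrix.IsHermitian.posDef_of_spectrum_pos {n : Type*} [Fintype n] [DecidableEq n]
    {A : Matrix n n ℝ} (hA : A.IsHermitian) (h : ∀ e ∈ spectrum ℝ A, 0 < e) : A.PosDef :=
  hA.posDef_iff_eigenvalues_pos.mpr fun i => h _ (hA.eigenvalues_mem_spectrum_real i)

lemma Matrix.IsHermitian.posDef_one_sub_smul {n : Type*} [Fintype n] [DecidableEq n]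
    {A : Matrix n n ℝ} (hA : A.IsHermitian) {κ : ℝ} (h : ∀ e ∈ spectrum ℝ A, κ * e < 1) :
    (1 - κ • A).PosDef := by
  rcases eq_or_ne κ 0 with rfl | hκ
  · simpa using PosDef.one
  refine (isHermitian_one.sub (hA.smul (IsSelfAdjoint.all κ))).posDef_of_spectrum_pos fun e he => ?_
  rw [← map_one (algebraMap ℝ (Matrix n n ℝ)), ← spectrum.singleton_sub_eq,
    show κ • A = Units.mk0 κ hκ • A from rfl, spectrum.unit_smul_eq_smul] at he
  obtain ⟨_, rfl, _, ⟨e, he, rfl⟩, rfl⟩ := he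
  simpa using h e he

namespace IsOutLaplacian

variable {N : ℕ} {A L : Matrix (Fin N) (Fin N) ℝ}

lemma eq_diagonal_sub (hA : ∀ i, A i i = 0) (hL : IsOutLaplacian A L) :
    L = diagonal (fun i => ∑ j, A i j) - A := by
  ext i j
  rcases eq_or_ne i j with rfl | hij
  · simp [hL.1, hA]
  · simp [hL.2 i j hij, hij]

lemma transpose_eq (hA : ∀ i, A i i = 0) (hL : IsOutLaplacian A L) (hSym : Aᵀ = A) :
    Lᵀ = L := by
  rw [hL.eq_diagonal_sub hA, transpose_sub, diagonal_transpose, hSym]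

lemma mulVec_apply (hA : ∀ i, A i i = 0) (hL : IsOutLaplacian A L) (x : Fin N → ℝ)
    (i : Fin N) : (L *ᵥ x) i = ∑ j, A i j * (x i - x j) := by
  rw [hL.eq_diagonal_sub hA, sub_mulVec, Pi.sub_apply, mulVec_diagonal, Finset.sum_mul]
  simp only [mulVec, dotProduct, ← Finset.sum_sub_distrib, mul_sub]

lemma two_mul_dotProduct_mulVec (hA : ∀ i, A i i = 0) (hL : IsOutLaplacian A L)
    (hSym : Aᵀ = A) (x : Fin N → ℝ) :
    2 * (x ⬝ᵥ (L *ᵥ x)) = ∑ i, ∑ j, A i j * (x i - x j) ^ 2 := by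
  have h₁ : x ⬝ᵥ (L *ᵥ x) = ∑ i, ∑ j, A i j * (x i - x j) * x i := by
    simp [dotProduct, hL.mulVec_apply hA, Finset.mul_sum, mul_comm]
  have h₂ : x ⬝ᵥ (L *ᵥ x) = ∑ i, ∑ j, A i j * (x j - x i) * x j := by
    rw [h₁, Finset.sum_comm]
    exact Finset.sum_congr rfl fun i _ => Finset.sum_congr rfl fun j _ => by
      rw [IsSymm.apply hSym]
  rw [two_mul]
  nth_rw 1 [h₁]
  rw [h₂, ← Finset.sum_add_distrib]
  refine Finset.sum_congr rfl fun i _ => ?_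
  rw [← Finset.sum_add_distrib]
  exact Finset.sum_congr rfl fun j _ => by ring

lemma dotProduct_mulVec_nonneg (hA : IsAdjacencyMatrix A) (hL : IsOutLaplacian A L)
    (hSym : Aᵀ = A) (x : Fin N → ℝ) : 0 ≤ x ⬝ᵥ (L *ᵥ x) := by
  have := hL.two_mul_dotProduct_mulVec hA.2 hSym x
  have : 0 ≤ ∑ i, ∑ j, A i j * (x i - x j) ^ 2 :=
    Finset.sum_nonneg fun i _ => Finset.sum_nonneg fun j _ => mul_nonneg (hA.1 i j) (sq_nonneg _)
  linarith

lemma eq_of_dotProduct_mulVec_eq_zero (hA : IsAdjacencyMatrix A) (hL : IsOutLaplacian A L)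
    (hSym : Aᵀ = A)
    (hConn : ∀ i j : Fin N, i ≠ j → Relation.TransGen (fun u v => 0 < A u v) i j)
    {x : Fin N → ℝ} (hx : x ⬝ᵥ (L *ᵥ x) = 0) (i j : Fin N) : x i = x j := by
  have hsum := hL.two_mul_dotProduct_mulVec hA.2 hSym x
  rw [hx, mul_zero, eq_comm, Finset.sum_eq_zero_iff_of_nonneg fun i _ =>
    Finset.sum_nonneg fun j _ => mul_nonneg (hA.1 i j) (sq_nonneg _)] at hsum
  have hedge : ∀ u v, 0 < A u v → x u = x v := fun u v huv => by
    have := (Finset.sum_eq_zero_iff_of_nonneg fun j _ => mul_nonneg (hA.1 u j)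
      (sq_nonneg _)).mp (hsum u (Finset.mem_univ u)) v (Finset.mem_univ v)
    exact sub_eq_zero.mp <| pow_eq_zero_iff two_ne_zero |>.mp <|
      (mul_eq_zero.mp this).resolve_left huv.ne'
  rcases eq_or_ne i j with rfl | hij
  · rfl
  have hpath := hConn i j hij
  clear hij
  induction hpath with
  | single h => exact hedge _ _ h
  | tail _ h ih => exact ih.trans (hedge _ _ h)

lemma posDef_transpose_mul_mul {m : Type*} [Fintype m] [DecidableEq m]
    (hA : IsAdjacencyMatrix A) (hL : IsOutLaplacian A L) (hSym : Aᵀ = A)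
    (hConn : ∀ i j : Fin N, i ≠ j → Relation.TransGen (fun u v => 0 < A u v) i j)
    {R : Matrix (Fin N) m ℝ} (hR1 : Rᵀ * R = 1) (hR2 : Rᵀ *ᵥ (fun _ => (1 : ℝ)) = 0) :
    (Rᵀ * L * R).PosDef := by
  have hLherm : L.IsHermitian := isHermitian_iff_isSymm.mpr (hL.transpose_eq hA.2 hSym)
  refine .of_dotProduct_mulVec_pos (by simpa using isHermitian_conjTranspose_mul_mul R hLherm)
    fun y hy => ?_
  have hRy : R *ᵥ y ≠ 0 := fun h => hy <| by
    rw [← one_mulVec y, ← hR1, ← mulVec_mulVec, h, mulVec_zero]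
  obtain ⟨i₀, -⟩ := Function.ne_iff.mp hRy
  rw [star_trivial, ← mulVec_mulVec, ← mulVec_mulVec, dotProduct_mulVec, vecMul_transpose]
  refine (hL.dotProduct_mulVec_nonneg hA hSym _).lt_of_ne fun h => hy ?_
  have hconst : R *ᵥ y = (R *ᵥ y) i₀ • fun _ => 1 :=
    funext fun i => by simp [hL.eq_of_dotProduct_mulVec_eq_zero hA hSym hConn h.symm i i₀]
  rw [← one_mulVec y, ← hR1, ← mulVec_mulVec, hconst, mulVec_smul, hR2, smul_zero]

end IsOutLaplacian

theorem statement7_general {N : ℕ}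
    (A L : Matrix (Fin N) (Fin N) ℝ)
    (hA : IsAdjacencyMatrix A) (hL : IsOutLaplacian A L)
    (hSym : Aᵀ = A)
    (hConn : ∀ i j : Fin N, i ≠ j → Relation.TransGen (fun u v => 0 < A u v) i j)
    (β δ : ℝ) (hβ : 0 < β) (hδ : 0 < δ)
    (hβδ : ∀ lam ∈ spectrum ℝ L, lam ≠ 0 → β * δ * lam < 1)
    (R : Matrix (Fin N) (Fin (N-1)) ℝ)
    (hR1 : Rᵀ * R = 1) (hR2 : Rᵀ.mulVec (fun _ => (1:ℝ)) = 0)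
    (H : Matrix (Fin (N-1)) (Fin (N-1)) ℝ) (hH : H = -β • (Rᵀ * L * R)) :
    DDExpStable (δ • H) 1 := by
  have hLherm : L.IsHermitian := isHermitian_iff_isSymm.mpr (hL.transpose_eq hA.2 hSym)
  have hRinj : Function.Injective R.mulVec := fun x y h => by
    simpa [mulVec_mulVec, hR1] using congrArg (Rᵀ *ᵥ ·) h
  have hneg : (-(δ • H)).PosDef := by
    convert (hL.posDef_transpose_mul_mul hA hSym hConn hR1 hR2).smul (mul_pos hβ hδ) using 1
    rw [hH, smul_smul, ← neg_smul, mul_neg, neg_neg, mul_comm]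
  have hone : (1 + δ • H).PosDef := by
    have := (hLherm.posDef_one_sub_smul (κ := β * δ) fun e he => by
      rcases eq_or_ne e 0 with rfl | he0
      · simp
      · exact hβδ e he he0).conjTranspose_mul_mul_same hRinj
    convert this using 1
    rw [conjTranspose_eq_transpose_of_trivial, Matrix.mul_sub, Matrix.sub_mul, Matrix.mul_one, hR1,
      Matrix.mul_smul, Matrix.smul_mul, hH, smul_smul, mul_neg, neg_smul, ← sub_eq_add_neg,
      mul_comm]
  exact ddExpStable_one_of_spectrum_delayCompanion fun z hz =>
    norm_lt_one_of_mem_spectrum_delayCompanion hneg hone hz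

/-- over a connected undirected graph, if `β δ λ < 1` for every nonzero
eigenvalue `λ` of `L`, then the one-step-delay difference equation
`p(k+1) = p(k) + δ H p(k-1)` is exponentially stable. -/
theorem statement7 {N : ℕ} (hN : 2 ≤ N)
    (A L : Matrix (Fin N) (Fin N) ℝ)
    (hA : IsAdjacencyMatrix A) (hL : IsOutLaplacian A L)
    (hSym : Aᵀ = A)
    (hConn : ∀ i j : Fin N, i ≠ j → Relation.TransGen (fun u v => 0 < A u v) i j)
    (β δ : ℝ) (hβ : 0 < β) (hδ : 0 < δ)
    (hβδ : ∀ lam ∈ spectrum ℝ L, lam ≠ 0 → β * δ * lam < 1)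
    (R : Matrix (Fin N) (Fin (N-1)) ℝ)
    (hR1 : Rᵀ * R = 1) (hR2 : Rᵀ.mulVec (fun _ => (1:ℝ)) = 0)
    (H : Matrix (Fin (N-1)) (Fin (N-1)) ℝ) (hH : H = -β • (Rᵀ * L * R)) :
    DDExpStable (δ • H) 1 :=
  statement7_general A L hA hL hSym hConn β δ hβ hδ hβδ R hR1 hR2 H hH
end

section
/- Let L be the out-Laplacian of an SCWB digraph on N ≥ 2 nodes, let β > 0, 0 < δ < 1/(β 𝖽ᵐᵃˣ), d ∈ ℤ_{≥0}, and set H = −β Rᵀ L R ∈ ℝ^{(N−1)×(N−1)}. Suppose there exist k̄ > 0 and ω ∈ (0,1) such that the delayed matrix exponential satisfies ‖e_d^{δH·(k−d)}‖ ≤ k̄ ω^k for all integers k ≥ 0. Let r ∈ ℝ^N be a constant vector, extended to 𝗋(k) = r for k ≥ 0 and 𝗋(k) = 0 for k < 0, and let z : {k ∈ ℤ : k ≥ −d} → ℝ^N satisfy z(k) = 0 for −d ≤ k ≤ −1, 1_Nᵀ z(0) = 0, and z(k+1) = z(k) − δ β L x(k−d) for all k ≥ 0, where x(k) = z(k) +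 𝗋(k). Set r̄ = (1/N) Σ_{j=1}^N r_j. Then ‖x(k) − r̄ 1_N‖ ≤ k̄ ω^k ‖x(0) − r̄ 1_N‖ for all k ≥ 0; in particular every component x_i(k) converges exponentially to the exact average r̄ as k → ∞. -/
/-!
Because `1ᵀ L = 0`, the entries of `z(k)` keep summing to zero, so `x(k) - r̄ 1 = Π x(k)` is the
disagreement vector. Completing the columns of `R` by `1/√N` to an orthogonal matrix gives
`R Rᵀ = Π`, so `w(k) = Rᵀ x(k)` determines `Π x(k)` isometrically, and since `L 1 = 0` it obeys
`w(k+1) = w(k) + δH w(k-d)` with zero history on `[-d, -1]`. By the Pascal rule for the binomial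
coefficients, `e_d^{A(k+1)} = e_d^{Ak} + A e_d^{A(k-d)}`, so this delayed equation is solved by
`w(k) = e_d^{δH(k-d)} w(0)`, and the decay hypothesis bounds its norm.
-/

open Matrix Filter

/-- The delayed matrix exponential `e_d^{A k}`: zero for `k < -d`, and for `k ≥ -d` equal to
`∑_{l=0}^{m_k} C(k-(l-1)d, l) Aˡ` with `m_k = max(⌈k/(d+1)⌉, 0)`. -/
noncomputable def delayExp {n : ℕ} (A : Matrix (Fin n) (Fin n) ℝ) (d : ℕ) (k : ℤ) :
    Matrix (Fin n) (Fin n) ℝ :=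
  if k < -(d:ℤ) then 0
  else ∑ l ∈ Finset.range ((max (⌈(k : ℚ) / ((d : ℚ) + 1)⌉) 0).toNat + 1),
    (((k - ((l : ℤ) - 1) * (d : ℤ)).toNat.choose l : ℝ)) • A ^ l

def delayCoeff (d : ℕ) (k : ℤ) (l : ℕ) : ℕ := (k - ((l : ℤ) - 1) * d).toNat.choose l

lemma delayCoeff_eq_zero {d : ℕ} {k : ℤ} {l : ℕ} (hk : -(d : ℤ) ≤ k) (h : k + d < l * (d + 1)) :
    delayCoeff d k l = 0 :=
  Nat.choose_eq_zero_of_lt <| by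
    have hl : l ≠ 0 := by rintro rfl; push_cast at h; omega
    rw [Int.toNat_lt_of_ne_zero hl]
    linarith

lemma delayCoeff_zero (d : ℕ) (k : ℤ) : delayCoeff d k 0 = 1 := Nat.choose_zero_right _

lemma delayCoeff_succ_succ (d : ℕ) {k : ℤ} (hk : 0 ≤ k) (l : ℕ) :
    delayCoeff d (k + 1) (l + 1) = delayCoeff d k (l + 1) + delayCoeff d (k - d) l := by
  unfold delayCoeff
  rw [show k + 1 - ((l + 1 : ℕ) - 1 : ℤ) * d = k - l * d + 1 by push_cast; ring,
    show k - ((l + 1 : ℕ) - 1 : ℤ) * d = k - l * d by push_cast; ring,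
    show k - d - ((l : ℤ) - 1) * d = k - l * d by ring]
  rcases le_or_gt 0 (k - l * d) with hn | hn
  · rw [Int.toNat_add hn zero_le_one, Int.toNat_one, Nat.choose_succ_succ', add_comm]
  · have hl : 0 < l := by
      rcases Nat.eq_zero_or_pos l with rfl | hl
      · simp only [CharP.cast_eq_zero, zero_mul, sub_zero] at hn; omega
      · exact hl
    rw [show (k - l * d + 1).toNat = 0 by omega, show (k - l * d).toNat = 0 by omega,
      Nat.choose_zero_succ, Nat.choose_eq_zero_of_lt hl]

lemma delayExp_of_lt {n : ℕ} (A : Matrix (Fin n) (Fin n) ℝ) {d : ℕ} {k : ℤ} (hk : k < -(d : ℤ)) :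
    delayExp A d k = 0 :=
  if_pos hk

lemma toNat_max_ceil_div_lt_iff {d : ℕ} {k : ℤ} (hk : -(d : ℤ) ≤ k) (l : ℕ) :
    (max ⌈(k : ℚ) / ((d : ℚ) + 1)⌉ 0).toNat < l ↔ k + d < l * (d + 1) := by
  rcases Nat.eq_zero_or_pos l with rfl | hl
  · simp only [Nat.not_lt_zero, CharP.cast_eq_zero, zero_mul, false_iff, not_lt]
    omega
  rw [Int.toNat_lt_of_ne_zero hl.ne', max_lt_iff, Int.ceil_lt_iff,
    div_le_iff₀ (by positivity)]
  simp only [Nat.cast_pos.mpr hl, and_true]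
  have key : (k : ℚ) ≤ ((l : ℤ) - 1) * ((d : ℚ) + 1) ↔ k ≤ ((l : ℤ) - 1) * (d + 1) := by
    norm_cast
  rw [key]
  constructor <;> intro h <;> linarith

lemma delayExp_eq_sum {n : ℕ} (A : Matrix (Fin n) (Fin n) ℝ) {d : ℕ} {k : ℤ}
    (hk : -(d : ℤ) ≤ k) (M : ℕ) (hM : k + d < M * (d + 1)) :
    delayExp A d k = ∑ l ∈ Finset.range M, (delayCoeff d k l : ℝ) • A ^ l := by
  rw [delayExp, if_neg (not_lt.mpr hk)]
  refine Finset.sum_subset (Finset.range_subset_range.mpr ?_) fun l _ hl => ?_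
  · exact (toNat_max_ceil_div_lt_iff hk M).mpr hM
  · rw [Finset.mem_range, not_lt, Nat.succ_le_iff, toNat_max_ceil_div_lt_iff hk] at hl
    rw [← delayCoeff, delayCoeff_eq_zero hk hl, Nat.cast_zero, zero_smul]

lemma delayExp_eq_one {n : ℕ} (A : Matrix (Fin n) (Fin n) ℝ) {d : ℕ} {k : ℤ}
    (hk : -(d : ℤ) ≤ k) (hk' : k ≤ 0) : delayExp A d k = 1 := by
  rw [delayExp_eq_sum A hk 1 (by omega)]
  simp [delayCoeff_zero]

lemma delayExp_succ {n : ℕ} (A : Matrix (Fin n) (Fin n) ℝ) {d : ℕ} {k : ℤ}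
    (hk : -(d : ℤ) ≤ k) :
    delayExp A d (k + 1) = delayExp A d k + A * delayExp A d (k - d) := by
  rcases lt_or_ge k 0 with hneg | hk0
  · rw [delayExp_eq_one A (by omega) (by omega), delayExp_eq_one A hk hneg.le,
      delayExp_of_lt A (by omega), mul_zero, add_zero]
  obtain ⟨m, rfl⟩ := Int.eq_ofNat_of_zero_le hk0
  rw [delayExp_eq_sum A (by omega) (m + 2) (by push_cast; nlinarith),
    delayExp_eq_sum A hk (m + 2) (by push_cast; nlinarith),
    delayExp_eq_sum A (by omega) (m + 1) (by push_cast; nlinarith),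
    Finset.sum_range_succ', Finset.sum_range_succ' _ (m + 1), Finset.mul_sum]
  simp only [delayCoeff_succ_succ d hk0, delayCoeff_zero, Nat.cast_add, add_smul,
    Finset.sum_add_distrib, mul_smul_comm, ← pow_succ']
  abel

lemma eq_delayExp_mulVec_of_recursion {n : ℕ} (M : Matrix (Fin n) (Fin n) ℝ) (d : ℕ)
    (w : ℤ → Fin n → ℝ) (hpast : ∀ k, -(d : ℤ) ≤ k → k < 0 → w k = 0)
    (hstep : ∀ k, 0 ≤ k → w (k + 1) = w k + M *ᵥ w (k - d)) {k : ℤ} (hk : -(d : ℤ) ≤ k) :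
    w k = delayExp M d (k - d) *ᵥ w 0 := by
  suffices h : ∀ m : ℕ, ∀ k, -(d : ℤ) ≤ k → k ≤ m → w k = delayExp M d (k - d) *ᵥ w 0 from
    h k.toNat k hk (Int.self_le_toNat k)
  intro m
  induction m with
  | zero =>
    intro k hk hk0
    rcases hk0.lt_or_eq with hneg | rfl
    · rw [hpast k hk hneg, delayExp_of_lt M (by omega), zero_mulVec]
    · rw [Nat.cast_zero, zero_sub, delayExp_eq_one M le_rfl (by omega), one_mulVec]
  | succ m ih =>
    intro k hk hkm
    rcases le_or_gt k m with hle | hgt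
    · exact ih k hk hle
    obtain rfl : k = m + 1 := by omega
    rw [hstep m (by omega), ih m (by omega) le_rfl, ih (m - d) (by omega) (by omega),
      show (m : ℤ) + 1 - d = m - d + 1 by ring, delayExp_succ M (by omega), add_mulVec,
      mulVec_mulVec]

lemma mul_transpose_add_vecMulVec_eq_one {m n : Type*} [Fintype m] [Fintype n] [DecidableEq m]
    [DecidableEq n] (hcard : Fintype.card n = Fintype.card m + 1) (R : Matrix n m ℝ) (u : n → ℝ)
    (hR : Rᵀ * R = 1) (hRu : Rᵀ *ᵥ u = 0) (hu : u ⬝ᵥ u = 1) :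
    R * Rᵀ + vecMulVec u u = 1 := by
  set c : Matrix n Unit ℝ := replicateCol Unit u
  have hRc : Rᵀ * c = 0 := by
    ext j _
    simpa [c, mul_apply, mulVec, dotProduct] using congrFun hRu j
  have hcc : cᵀ * c = 1 := by
    ext
    simpa [c, mul_apply, dotProduct] using hu
  have hQ : (fromCols c R)ᵀ * fromCols c R = 1 := by
    rw [transpose_fromCols, fromRows_mul_fromCols, hcc, hR, hRc,
      show cᵀ * R = (Rᵀ * c)ᵀ by rw [transpose_mul, transpose_transpose], hRc, transpose_zero,
      fromBlocks_one]
  have hQ' := (mul_eq_one_comm_of_equiv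
    (Fintype.equivOfCardEq (by simp [hcard, add_comm]))).mp hQ
  rw [transpose_fromCols, fromCols_mul_fromRows] at hQ'
  rw [← hQ', add_comm]
  congr 1
  ext i j
  simp [c, mul_apply, vecMulVec_apply]

lemma toLp_mulVec_transpose_mulVec_eq_proj {N : ℕ} (hN : 0 < N)
    (R : Matrix (Fin N) (Fin (N - 1)) ℝ) (hR1 : Rᵀ * R = 1)
    (hR2 : Rᵀ *ᵥ (fun _ => (1 : ℝ)) = 0) (v : EuclideanSpace ℝ (Fin N)) :
    WithLp.toLp 2 (R *ᵥ (Rᵀ *ᵥ v.ofLp)) = proj v := by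
  set u : Fin N → ℝ := (√N)⁻¹ • fun _ => 1
  have hRu : Rᵀ *ᵥ u = 0 := by rw [mulVec_smul, hR2, smul_zero]
  have hsqrt : (√N)⁻¹ * (√N)⁻¹ = (N : ℝ)⁻¹ := by
    rw [← mul_inv, Real.mul_self_sqrt (Nat.cast_nonneg N)]
  have hu : u ⬝ᵥ u = 1 := by
    simp [u, dotProduct, hsqrt, hN.ne']
  have hRR := mul_transpose_add_vecMulVec_eq_one (by rw [Fintype.card_fin, Fintype.card_fin]; omega) R u hR1 hRu hu
  rw [mulVec_mulVec, eq_sub_of_add_eq hRR, sub_mulVec, one_mulVec, vecMulVec_mulVec]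
  ext i
  simp only [proj, avg, ones, u, dotProduct, PiLp.sub_apply, Pi.sub_apply, Pi.smul_apply,
    PiLp.smul_apply, smul_eq_mul, mul_one, op_smul_eq_mul]
  rw [← Finset.mul_sum, ← mul_assoc, hsqrt, inv_mul_eq_div]

lemma norm_toLp_mulVec {m n : Type*} [Fintype m] [Fintype n] [DecidableEq n] {R : Matrix m n ℝ}
    (hR : Rᵀ * R = 1) (w : n → ℝ) : ‖WithLp.toLp 2 (R *ᵥ w)‖ = ‖WithLp.toLp 2 w‖ := by
  have h : (R *ᵥ w) ⬝ᵥ (R *ᵥ w) = w ⬝ᵥ w := by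
    rw [dotProduct_mulVec, ← mulVec_transpose, mulVec_mulVec, hR, one_mulVec, dotProduct_comm]
  rw [← sq_eq_sq₀ (norm_nonneg _) (norm_nonneg _), EuclideanSpace.real_norm_sq_eq,
    EuclideanSpace.real_norm_sq_eq]
  simpa [dotProduct, sq] using h

lemma norm_proj_eq_norm_transpose_mulVec {N : ℕ} (hN : 0 < N)
    {R : Matrix (Fin N) (Fin (N - 1)) ℝ} (hR1 : Rᵀ * R = 1)
    (hR2 : Rᵀ *ᵥ (fun _ => (1 : ℝ)) = 0) (v : EuclideanSpace ℝ (Fin N)) :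
    ‖proj v‖ = ‖WithLp.toLp 2 (Rᵀ *ᵥ v.ofLp)‖ := by
  rw [← toLp_mulVec_transpose_mulVec_eq_proj hN R hR1 hR2, norm_toLp_mulVec hR1]

lemma IsOutLaplacian.sum_row_eq_zero {N : ℕ} {A L : Matrix (Fin N) (Fin N) ℝ}
    (hL : IsOutLaplacian A L) (hA : ∀ i, A i i = 0) (i : Fin N) : ∑ j, L i j = 0 := by
  rw [← Finset.add_sum_erase _ _ (Finset.mem_univ i), hL.1,
    ← Finset.add_sum_erase _ _ (Finset.mem_univ i), hA, zero_add, ← Finset.sum_add_distrib]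
  exact Finset.sum_eq_zero fun j hj => by
    rw [hL.2 i j (Finset.ne_of_mem_erase hj).symm, add_neg_cancel]

lemma IsOutLaplacian.mulVec_proj {N : ℕ} {A L : Matrix (Fin N) (Fin N) ℝ}
    (hL : IsOutLaplacian A L) (hA : ∀ i, A i i = 0) (v : EuclideanSpace ℝ (Fin N)) :
    L *ᵥ (proj v).ofLp = L *ᵥ v.ofLp := by
  have hL1 : L *ᵥ (ones N).ofLp = 0 := funext fun i => by
    simpa [ones, mulVec, dotProduct] using hL.sum_row_eq_zero hA i
  rw [proj, WithLp.ofLp_sub, WithLp.ofLp_smul, mulVec_sub, mulVec_smul, hL1, smul_zero,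
    sub_zero]

lemma IsOutLaplacian.transpose_mulVec_step {N : ℕ} (hN : 0 < N)
    {A L : Matrix (Fin N) (Fin N) ℝ} (hL : IsOutLaplacian A L) (hA : ∀ i, A i i = 0)
    {R : Matrix (Fin N) (Fin (N - 1)) ℝ} (hR1 : Rᵀ * R = 1)
    (hR2 : Rᵀ *ᵥ (fun _ => (1 : ℝ)) = 0) (c : ℝ) (x y : EuclideanSpace ℝ (Fin N)) :
    Rᵀ *ᵥ (x - c • toEuclideanLin L y).ofLp
      = Rᵀ *ᵥ x.ofLp + (-c • (Rᵀ * L * R)) *ᵥ (Rᵀ *ᵥ y.ofLp) := by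
  have hLy : L *ᵥ y.ofLp = L *ᵥ (R *ᵥ (Rᵀ *ᵥ y.ofLp)) := by
    rw [← hL.mulVec_proj hA, ← toLp_mulVec_transpose_mulVec_eq_proj hN R hR1 hR2]
  rw [WithLp.ofLp_sub, WithLp.ofLp_smul, ofLp_toLpLin, toLin'_apply, hLy, mulVec_sub,
    mulVec_smul, smul_mulVec, ← mulVec_mulVec, ← mulVec_mulVec, neg_smul, sub_eq_add_neg]

lemma IsWeightBalanced.sum_sub_smul_toEuclideanLin {N : ℕ} {L : Matrix (Fin N) (Fin N) ℝ}
    (hL : IsWeightBalanced L) (c : ℝ) (z y : EuclideanSpace ℝ (Fin N)) :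
    ∑ i, (z - c • toEuclideanLin L y) i = ∑ i, z i := by
  have hLy : ∑ i, (L *ᵥ y.ofLp) i = 0 := by
    simp only [mulVec, dotProduct]
    rw [Finset.sum_comm]
    exact Finset.sum_eq_zero fun j _ => by rw [← Finset.sum_mul, hL j, zero_mul]
  simp [Finset.sum_sub_distrib, ← Finset.mul_sum, hLy]

lemma tendsto_of_norm_sub_le_geometric {E : Type*} [SeminormedAddCommGroup E] {x : ℤ → E}
    {c : E} {C ω : ℝ} (hω : |ω| < 1) (h : ∀ k, 0 ≤ k → ‖x k - c‖ ≤ C * ω ^ k) :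
    Tendsto x atTop (nhds c) := by
  have hpow : Tendsto (fun k : ℤ => ω ^ k) atTop (nhds 0) := by
    have := (tendsto_rpow_atTop_of_base_lt_one ω (abs_lt.mp hω).1 (abs_lt.mp hω).2).comp
      tendsto_intCast_atTop_atTop
    simpa [Function.comp_def, Real.rpow_intCast] using this
  rw [tendsto_iff_norm_sub_tendsto_zero]
  refine squeeze_zero' (Eventually.of_forall fun _ => norm_nonneg _) ?_
    (by simpa using hpow.const_mul C)
  filter_upwards [eventually_ge_atTop 0] with k hk using h k hk

theorem statement16_general {N : ℕ} (hN : 2 ≤ N)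
    (A L : Matrix (Fin N) (Fin N) ℝ)
    (hA : IsAdjacencyMatrix A) (hL : IsOutLaplacian A L)
    (hWB : IsWeightBalanced L)
    (β δ : ℝ)
    (d : ℕ)
    (R : Matrix (Fin N) (Fin (N-1)) ℝ)
    (hR1 : Rᵀ * R = 1) (hR2 : Rᵀ.mulVec (fun _ => (1:ℝ)) = 0)
    (H : Matrix (Fin (N-1)) (Fin (N-1)) ℝ) (hH : H = -β • (Rᵀ * L * R))
    (kbar ω : ℝ) (hω : ω ∈ Set.Ioo (0:ℝ) 1)
    (hdecay : ∀ k : ℤ, 0 ≤ k →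
      ‖Matrix.toEuclideanCLM (𝕜 := ℝ) (delayExp (δ • H) d (k - d))‖ ≤ kbar * ω ^ k)
    (r : EuclideanSpace ℝ (Fin N))
    (rsig : ℤ → EuclideanSpace ℝ (Fin N))
    (hrsig : ∀ k : ℤ, rsig k = if 0 ≤ k then r else 0)
    (z : ℤ → EuclideanSpace ℝ (Fin N))
    (hzneg : ∀ k : ℤ, -(d:ℤ) ≤ k → k ≤ -1 → z k = 0)
    (hz0 : ∑ i, z 0 i = 0)
    (x : ℤ → EuclideanSpace ℝ (Fin N)) (hx : ∀ k, x k = z k + rsig k)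
    (hrec : ∀ k : ℤ, 0 ≤ k →
      z (k + 1) = z k - (δ * β) • Matrix.toEuclideanLin L (x (k - d))) :
    (∀ k : ℤ, 0 ≤ k →
      ‖x k - avg r • ones N‖ ≤ kbar * ω ^ k * ‖x 0 - avg r • ones N‖) ∧
    ∀ i : Fin N,
      Filter.Tendsto (fun k : ℤ => x k i) Filter.atTop (nhds (avg r)) := by
  have hN0 : 0 < N := by omega
  have hx_past : ∀ k, -(d : ℤ) ≤ k → k < 0 → x k = 0 := fun k hk hk' => by
    rw [hx, hrsig, if_neg (by omega), hzneg k hk (by omega), add_zero]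
  have hx_succ : ∀ k, 0 ≤ k → x (k + 1) = x k - (δ * β) • toEuclideanLin L (x (k - d)) := by
    intro k hk
    rw [hx, hx, hrsig, hrsig, if_pos hk, if_pos (by omega), hrec k hk, sub_add_eq_add_sub]
  have hz_sum : ∀ k, 0 ≤ k → ∑ i, z k i = 0 := by
    intro k hk
    induction k, hk using Int.leInduction with
    | base => exact hz0
    | succ k hk ih => rw [hrec k hk, hWB.sum_sub_smul_toEuclideanLin, ih]
  have hdev : ∀ k, 0 ≤ k → x k - avg r • ones N = proj (x k) := by
    intro k hk
    rw [proj, hx k, hrsig, if_pos hk]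
    congr 2
    simp [avg, Finset.sum_add_distrib, hz_sum k hk]
  set w : ℤ → Fin (N - 1) → ℝ := fun k => Rᵀ *ᵥ (x k).ofLp
  have hw : ∀ k, -(d : ℤ) ≤ k → w k = delayExp (δ • H) d (k - d) *ᵥ w 0 := by
    refine fun k => eq_delayExp_mulVec_of_recursion _ d w
      (fun k hk hk' => by simp [w, hx_past k hk hk']) fun k hk => ?_
    simp only [w]
    rw [hx_succ k hk, hL.transpose_mulVec_step hN0 hA.2 hR1 hR2, hH, smul_smul, mul_neg]
  have hbound : ∀ k, 0 ≤ k →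
      ‖x k - avg r • ones N‖ ≤ kbar * ω ^ k * ‖x 0 - avg r • ones N‖ := by
    intro k hk
    rw [hdev k hk, hdev 0 le_rfl, norm_proj_eq_norm_transpose_mulVec hN0 hR1 hR2,
      norm_proj_eq_norm_transpose_mulVec hN0 hR1 hR2]
    change ‖WithLp.toLp 2 (w k)‖ ≤ _ * ‖WithLp.toLp 2 (w 0)‖
    rw [hw k (by omega), ← toEuclideanCLM_toLp]
    exact (ContinuousLinearMap.le_opNorm _ _).trans
      (mul_le_mul_of_nonneg_right (hdecay k hk) (norm_nonneg _))
  refine ⟨hbound, fun i => ?_⟩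
  have hlim : Tendsto x atTop (nhds (avg r • ones N)) :=
    tendsto_of_norm_sub_le_geometric (C := kbar * ‖x 0 - avg r • ones N‖)
      (abs_lt.mpr ⟨by linarith [hω.1], hω.2⟩) fun k hk => (hbound k hk).trans_eq (by ring)
  simpa [ones, Function.comp_def] using ((PiLp.continuous_apply 2 _ i).tendsto _).comp hlim

/-- for static reference signals, the discrete-time dynamic average consensus
algorithm with admissible communication delay `d` converges exponentially (geometrically)
to the exact average. -/
theorem statement16 {N : ℕ} (hN : 2 ≤ N)
    (A L : Matrix (Fin N) (Fin N) ℝ)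
    (hA : IsAdjacencyMatrix A) (hL : IsOutLaplacian A L)
    (hSC : IsStronglyConnected A) (hWB : IsWeightBalanced L)
    (β δ : ℝ) (hβ : 0 < β)
    (dmax : ℝ) (hdmax : IsGreatest (Set.range fun i => ∑ j, A i j) dmax)
    (hδ0 : 0 < δ) (hδ1 : δ < 1 / (β * dmax))
    (d : ℕ)
    (R : Matrix (Fin N) (Fin (N-1)) ℝ)
    (hR1 : Rᵀ * R = 1) (hR2 : Rᵀ.mulVec (fun _ => (1:ℝ)) = 0)
    (H : Matrix (Fin (N-1)) (Fin (N-1)) ℝ) (hH : H = -β • (Rᵀ * L * R))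
    (kbar ω : ℝ) (hkbar : 0 < kbar) (hω : ω ∈ Set.Ioo (0:ℝ) 1)
    (hdecay : ∀ k : ℤ, 0 ≤ k →
      ‖Matrix.toEuclideanCLM (𝕜 := ℝ) (delayExp (δ • H) d (k - d))‖ ≤ kbar * ω ^ k)
    (r : EuclideanSpace ℝ (Fin N))
    (rsig : ℤ → EuclideanSpace ℝ (Fin N))
    (hrsig : ∀ k : ℤ, rsig k = if 0 ≤ k then r else 0)
    (z : ℤ → EuclideanSpace ℝ (Fin N))
    (hzneg : ∀ k : ℤ, -(d:ℤ) ≤ k → k ≤ -1 → z k = 0)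
    (hz0 : ∑ i, z 0 i = 0)
    (x : ℤ → EuclideanSpace ℝ (Fin N)) (hx : ∀ k, x k = z k + rsig k)
    (hrec : ∀ k : ℤ, 0 ≤ k →
      z (k + 1) = z k - (δ * β) • Matrix.toEuclideanLin L (x (k - d))) :
    (∀ k : ℤ, 0 ≤ k →
      ‖x k - avg r • ones N‖ ≤ kbar * ω ^ k * ‖x 0 - avg r • ones N‖) ∧
    ∀ i : Fin N,
      Filter.Tendsto (fun k : ℤ => x k i) Filter.atTop (nhds (avg r)) :=
  statement16_general hN A L hA hL hWB β δ d R hR1 hR2 H hH kbar ω hω hdecay r rsig hrsig z hzneg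
    hz0 x hx hrec
end
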